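/- Let G be a finitely generated group and μ a symmetric probability measure on G. Suppose that for each r ≥ 1 there is a finite subset K(r) ⊆ G such that: (i) for all g ∈ K(r) and all finitely supported f : G → ℝ, Σ_x |f(xg) − f(x)|² ≤ C_0 r E_μ(f,f), where E_μ(f,f) = (1/2)Σ_{x,y}|f(xy) − f(x)|²μ(y); and (ii) #K(r) ≥ v(r) for an increasing function v. Then for every finitely supported f and every r ≥ 1, ‖f‖_2² ≤ 2C_0 r E_μ(f,f) + 2 v(r)^{-1} ‖f‖_1². -/

import Mathlib

/-!
Write `f = (f - f_K) + f_K`, where `f_K` averages `f` over the right translates by `K`.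
By Jensen's inequality `‖f - f_K‖₂²` is at most the average over `g ∈ K` of
`‖f(· g) - f‖₂²`, which the pseudo-Poincaré inequality bounds by `C₀ r E_μ(f,f)`.
On the other hand `‖f_K‖_∞ ≤ ‖f‖₁ / #K` and `‖f_K‖₁ ≤ ‖f‖₁`, so
`‖f_K‖₂² ≤ ‖f_K‖_∞ ‖f_K‖₁ ≤ ‖f‖₁² / #K`, and `#K ≥ v(r)`.
-/

/-- The Dirichlet form `E_μ(f,f) = (1/2) Σ_{x,y} |f(xy) − f(x)|² μ(y)`. -/
noncomputable def muDirichletForm {G : Type*} [Group G] (μ : G → ℝ) (f : G → ℝ) : ℝ :=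
  (1 / 2) * ∑' p : G × G, (f (p.1 * p.2) - f p.1) ^ 2 * μ p.2

/-- The paper's `f_K`. -/
noncomputable def translateAvg {G : Type*} [Group G] (K : Finset G) (f : G → ℝ) (x : G) : ℝ :=
  (∑ g ∈ K, f (x * g)) / K.card

open Finset

lemma summable_sq_of_summable_abs {ι : Type*} {u : ι → ℝ} (hu : Summable fun i => |u i|) :
    Summable fun i => u i ^ 2 := by
  refine (hu.mul_left (∑' j, |u j|)).of_nonneg_of_le (fun i => sq_nonneg _) fun i => ?_
  rw [← sq_abs, sq]
  exact mul_le_mul_of_nonneg_right (hu.le_tsum i fun j _ => abs_nonneg _) (abs_nonneg _)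

section TranslateAvg

variable {G : Type*} [Group G] {K : Finset G} {f : G → ℝ}

lemma tsum_comp_mul_right (h : G → ℝ) (g : G) : ∑' x, h (x * g) = ∑' x, h x :=
  (Equiv.mulRight g).tsum_eq h

lemma summable_abs_comp_mul_right (hf : Summable fun x => |f x|) (g : G) :
    Summable fun x => |f (x * g)| :=
  (Equiv.mulRight g).summable_iff.mpr hf

lemma summable_sq_sub_comp_mul_right (hf : Summable fun x => |f x|) (g : G) :
    Summable fun x => (f (x * g) - f x) ^ 2 :=
  summable_sq_of_summable_abs
    (((summable_abs_comp_mul_right hf g).add hf).of_nonneg_of_le (fun _ => abs_nonneg _)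
      fun _ => abs_sub _ _)

lemma abs_translateAvg_le (K : Finset G) (f : G → ℝ) (x : G) :
    |translateAvg K f x| ≤ (∑ g ∈ K, |f (x * g)|) / #K := by
  rw [translateAvg, abs_div, Nat.abs_cast]
  gcongr
  exact abs_sum_le_sum_abs _ _

lemma abs_translateAvg_le_tsum (hf : Summable fun x => |f x|) (x : G) :
    |translateAvg K f x| ≤ (∑' y, |f y|) / #K := by
  classical
  have hsum : ∑ g ∈ K, |f (x * g)| = ∑ y ∈ K.image (x * ·), |f y| :=
    (sum_image (f := fun y => |f y|) fun _ _ _ _ h => mul_left_cancel h).symm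
  calc |translateAvg K f x| ≤ (∑ g ∈ K, |f (x * g)|) / #K := abs_translateAvg_le K f x
    _ ≤ (∑' y, |f y|) / #K := by
      rw [hsum]
      gcongr
      exact hf.sum_le_tsum _ fun _ _ => abs_nonneg _

lemma summable_abs_translateAvg (hf : Summable fun x => |f x|) :
    Summable fun x => |translateAvg K f x| :=
  ((summable_sum fun g _ => summable_abs_comp_mul_right hf g).div_const _).of_nonneg_of_le
    (fun _ => abs_nonneg _) (abs_translateAvg_le K f)

lemma summable_sq_translateAvg (hf : Summable fun x => |f x|) :
    Summable fun x => translateAvg K f x ^ 2 :=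
  summable_sq_of_summable_abs (by simpa only [abs_abs] using summable_abs_translateAvg hf)

lemma tsum_abs_translateAvg_le (hf : Summable fun x => |f x|) (hK : K.Nonempty) :
    ∑' x, |translateAvg K f x| ≤ ∑' x, |f x| := by
  have hcard : (#K : ℝ) ≠ 0 := by exact_mod_cast hK.card_pos.ne'
  calc ∑' x, |translateAvg K f x| ≤ ∑' x, (∑ g ∈ K, |f (x * g)|) / #K :=
        (summable_abs_translateAvg hf).tsum_le_tsum (abs_translateAvg_le K f)
          ((summable_sum fun g _ => summable_abs_comp_mul_right hf g).div_const _)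
    _ = ∑' x, |f x| := by
      rw [tsum_div_const, Summable.tsum_finsetSum fun g _ => summable_abs_comp_mul_right hf g]
      simp only [tsum_comp_mul_right fun y => |f y|, sum_const, nsmul_eq_mul]
      field_simp

lemma tsum_sq_translateAvg_le (hf : Summable fun x => |f x|) (hK : K.Nonempty) :
    ∑' x, translateAvg K f x ^ 2 ≤ (∑' x, |f x|) ^ 2 / #K := by
  have hpoint : ∀ x, translateAvg K f x ^ 2 ≤ (∑' y, |f y|) / #K * |translateAvg K f x| := by
    intro x
    rw [← sq_abs, sq]
    exact mul_le_mul_of_nonneg_right (abs_translateAvg_le_tsum hf x) (abs_nonneg _)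
  calc ∑' x, translateAvg K f x ^ 2 ≤ ∑' x, (∑' y, |f y|) / #K * |translateAvg K f x| :=
        (summable_sq_translateAvg hf).tsum_le_tsum hpoint
          ((summable_abs_translateAvg hf).mul_left _)
    _ = (∑' y, |f y|) / #K * ∑' x, |translateAvg K f x| := tsum_mul_left
    _ ≤ (∑' y, |f y|) / #K * ∑' x, |f x| :=
      mul_le_mul_of_nonneg_left (tsum_abs_translateAvg_le hf hK) (by positivity)
    _ = (∑' x, |f x|) ^ 2 / #K := by ring

lemma sq_sub_translateAvg_le (hK : K.Nonempty) (f : G → ℝ) (x : G) :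
    (f x - translateAvg K f x) ^ 2 ≤ (∑ g ∈ K, (f (x * g) - f x) ^ 2) / #K := by
  have hcard : (0 : ℝ) < #K := by exact_mod_cast hK.card_pos
  have hdiff : f x - translateAvg K f x = (∑ g ∈ K, (f (x * g) - f x)) / #K * -1 := by
    rw [translateAvg, sum_sub_distrib, sum_const, nsmul_eq_mul]
    field_simp
    ring
  rw [hdiff, mul_neg_one, neg_sq, div_pow, sq (#K : ℝ), ← div_div,
    div_le_div_iff_of_pos_right hcard, div_le_iff₀ hcard, mul_comm]
  exact sq_sum_le_card_mul_sum_sq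

lemma summable_sq_sub_translateAvg (hf : Summable fun x => |f x|) :
    Summable fun x => (f x - translateAvg K f x) ^ 2 :=
  summable_sq_of_summable_abs ((hf.add (summable_abs_translateAvg hf)).of_nonneg_of_le
    (fun _ => abs_nonneg _) fun _ => abs_sub _ _)

lemma tsum_sq_sub_translateAvg_le (hf : Summable fun x => |f x|) (hK : K.Nonempty) {B : ℝ}
    (hB : ∀ g ∈ K, ∑' x, (f (x * g) - f x) ^ 2 ≤ B) :
    ∑' x, (f x - translateAvg K f x) ^ 2 ≤ B := by
  have hsum : ∀ g ∈ K, Summable fun x => (f (x * g) - f x) ^ 2 :=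
    fun g _ => summable_sq_sub_comp_mul_right hf g
  calc ∑' x, (f x - translateAvg K f x) ^ 2 ≤ ∑' x, (∑ g ∈ K, (f (x * g) - f x) ^ 2) / #K :=
        (summable_sq_sub_translateAvg hf).tsum_le_tsum (sq_sub_translateAvg_le hK f)
          ((summable_sum hsum).div_const _)
    _ = (∑ g ∈ K, ∑' x, (f (x * g) - f x) ^ 2) / #K := by
      rw [tsum_div_const, Summable.tsum_finsetSum hsum]
    _ ≤ (∑ _g ∈ K, B) / #K := by gcongr with g hg; exact hB g hg
    _ = B := by
      rw [sum_const, nsmul_eq_mul]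
      field_simp

theorem tsum_sq_le_of_tsum_sq_sub_comp_mul_right_le (hf : Summable fun x => |f x|)
    (hK : K.Nonempty) {B : ℝ} (hB : ∀ g ∈ K, ∑' x, (f (x * g) - f x) ^ 2 ≤ B) :
    ∑' x, f x ^ 2 ≤ 2 * B + 2 * (∑' x, |f x|) ^ 2 / #K := by
  have hF : Summable fun x => translateAvg K f x ^ 2 := summable_sq_translateAvg hf
  have hpoint : ∀ x, f x ^ 2 ≤
      2 * (f x - translateAvg K f x) ^ 2 + 2 * translateAvg K f x ^ 2 := fun x => by
    simpa [mul_add] using add_sq_le (a := f x - translateAvg K f x) (b := translateAvg K f x)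
  calc ∑' x, f x ^ 2
      ≤ ∑' x, (2 * (f x - translateAvg K f x) ^ 2 + 2 * translateAvg K f x ^ 2) :=
        (summable_sq_of_summable_abs hf).tsum_le_tsum hpoint
          (((summable_sq_sub_translateAvg hf).mul_left 2).add (hF.mul_left 2))
    _ = 2 * ∑' x, (f x - translateAvg K f x) ^ 2 + 2 * ∑' x, translateAvg K f x ^ 2 := by
      rw [((summable_sq_sub_translateAvg hf).mul_left 2).tsum_add (hF.mul_left 2),
        tsum_mul_left, tsum_mul_left]
    _ ≤ 2 * B + 2 * (∑' x, |f x|) ^ 2 / #K := by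
      rw [mul_div_assoc]
      gcongr
      · exact tsum_sq_sub_translateAvg_le hf hK hB
      · exact tsum_sq_translateAvg_le hf hK

end TranslateAvg

theorem statement5_general {G : Type} [Group G]
    (μ : G → ℝ)
    (C₀ : ℝ)
    (K : ℝ → Finset G)
    (v : ℝ → ℝ) (hvpos : ∀ r : ℝ, 1 ≤ r → 0 < v r)
    (hPP : ∀ r : ℝ, 1 ≤ r → ∀ g ∈ K r, ∀ f : G → ℝ, (Function.support f).Finite →
      (∑' x : G, (f (x * g) - f x) ^ 2) ≤ C₀ * r * muDirichletForm μ f)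
    (hVol : ∀ r : ℝ, 1 ≤ r → v r ≤ (K r).card) :
    ∀ f : G → ℝ, (Function.support f).Finite → ∀ r : ℝ, 1 ≤ r →
      (∑' x : G, (f x) ^ 2) ≤
        2 * C₀ * r * muDirichletForm μ f + 2 * (v r)⁻¹ * (∑' x : G, |f x|) ^ 2 := by
  intro f hf r hr
  have hcard : 0 < ((K r).card : ℝ) := (hvpos r hr).trans_le (hVol r hr)
  have hK : (K r).Nonempty := Finset.card_pos.mp (by exact_mod_cast hcard)
  have hf1 : Summable fun x => |f x| :=
    summable_of_hasFiniteSupport (hf.subset fun x hx => by simpa using hx)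
  have hinv : ((K r).card : ℝ)⁻¹ ≤ (v r)⁻¹ := inv_anti₀ (hvpos r hr) (hVol r hr)
  calc ∑' x, f x ^ 2
      ≤ 2 * (C₀ * r * muDirichletForm μ f) + 2 * (∑' x, |f x|) ^ 2 / (K r).card :=
        tsum_sq_le_of_tsum_sq_sub_comp_mul_right_le hf1 hK fun g hg => hPP r hr g hg f hf
    _ ≤ 2 * C₀ * r * muDirichletForm μ f + 2 * (v r)⁻¹ * (∑' x, |f x|) ^ 2 := by
      have := mul_le_mul_of_nonneg_left hinv (sq_nonneg (∑' x, |f x|))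
      rw [div_eq_mul_inv]
      linarith

/-- Nash-type inequality from pseudo-Poincaré inequality and
volume.  Let `G` be a finitely generated group and `μ` a symmetric probability
measure on `G`.  Suppose that for each `r ≥ 1` there is a finite set
`K(r) ⊆ G` such that (i) for all `g ∈ K(r)` and all finitely supported `f`,
`Σ_x |f(xg) − f(x)|² ≤ C₀ r E_μ(f,f)`, and (ii) `#K(r) ≥ v(r)` with `v`
increasing (and positive).  Then for every finitely supported `f` and `r ≥ 1`,
`‖f‖₂² ≤ 2 C₀ r E_μ(f,f) + 2 v(r)⁻¹ ‖f‖₁²`. -/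
theorem statement5 {G : Type} [Group G] [Countable G]
    (hfg : ∃ A : Finset G, Subgroup.closure (A : Set G) = ⊤)
    (μ : G → ℝ) (hμ0 : ∀ g, 0 ≤ μ g) (hμsym : ∀ g, μ g⁻¹ = μ g)
    (hμ1 : ∑' g : G, μ g = 1)
    (C₀ : ℝ) (hC₀ : 0 < C₀)
    (K : ℝ → Finset G)
    (v : ℝ → ℝ) (hv : MonotoneOn v (Set.Ici 1)) (hvpos : ∀ r : ℝ, 1 ≤ r → 0 < v r)
    (hPP : ∀ r : ℝ, 1 ≤ r → ∀ g ∈ K r, ∀ f : G → ℝ, (Function.support f).Finite →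
      (∑' x : G, (f (x * g) - f x) ^ 2) ≤ C₀ * r * muDirichletForm μ f)
    (hVol : ∀ r : ℝ, 1 ≤ r → v r ≤ (K r).card) :
    ∀ f : G → ℝ, (Function.support f).Finite → ∀ r : ℝ, 1 ≤ r →
      (∑' x : G, (f x) ^ 2) ≤
        2 * C₀ * r * muDirichletForm μ f + 2 * (v r)⁻¹ * (∑' x : G, |f x|) ^ 2 :=
  statement5_general μ C₀ K v hvpos hPP hVol
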